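/- (Prism Condition.) Let n ≥ 1, let τ be an (n−1)-well-centered (n−1)-simplex in a Euclidean space, let u be a point not in the affine span of τ, and let σ = u∗τ. Let P(u) be the orthogonal projection of u onto the affine span of τ. If dist(u, c(τ)) > R(τ) (u lies strictly outside the equatorial ball of τ) and the reflection 2·c(τ) − P(u) of P(u) through c(τ) is a strictly positive affine combination of the vertices of τ (i.e., lies in the relative interior of τ), then σ is n-well-centered. -/

import Mathlib

open scoped RealInnerProductSpace
open Finset

variable {E : Type*} [NormedAddCommGroup E] [InnerProductSpace ℝ E]

/-- `x` is a strictly positive affine combination of the vertices of `s`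
(i.e. lies in the relative interior of `s`). -/
def Affine.Simplex.IsInteriorPoint {n : ℕ} (s : Affine.Simplex ℝ E n) (x : E) : Prop :=
  ∃ w : Fin (n + 1) → ℝ, (∑ i, w i) = 1 ∧ (∀ i, 0 < w i) ∧
    Finset.univ.affineCombination ℝ s.points w = x

/-- A simplex is well-centered if its circumcenter is a strictly positive affine
combination of its vertices. -/
def Affine.Simplex.IsWellCentered {n : ℕ} (s : Affine.Simplex ℝ E n) : Prop :=
  s.IsInteriorPoint s.circumcenter

/-!
The circumcenter of `σ = u ∗ τ` lies on the normal to `aff τ` through `c = c(τ)`: it is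
`c + s • (u - P)` with `s = (|u - c|² - R²) / (2 |u - P|²)`, the value that makes it as far
from `u` as from the vertices of `τ`. Since `u` is outside the equatorial ball, `s > 0`. The
reflection `y = 2c - P` lies in `τ`, hence in the ball `B(τ)`, so `|P - c| ≤ R`, which by
Pythagoras means `s ≤ 1/2`. Then `c + s • (u - P) = (1 - s) z + s u` where
`z = c + s/(1-s) • (y - c)` lies on the segment from `c` to `y`, hence in the relative interior
of `τ`, so all barycentric coordinates of the circumcenter in `σ` are positive.
-/

namespace Affine.Simplex

variable {n : ℕ}

theorem IsInteriorPoint.dist_circumcenter_le {s : Simplex ℝ E n} {x : E}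
    (hx : s.IsInteriorPoint x) : dist x s.circumcenter ≤ s.circumradius := by
  obtain ⟨w, hw1, hw0, rfl⟩ := hx
  refine convexHull_min ?_ (convex_closedBall _ _)
    (affineCombination_mem_convexHull (fun i _ => (hw0 i).le) hw1)
  rintro - ⟨i, rfl⟩
  exact (s.dist_circumcenter_eq_circumradius i).le

theorem IsInteriorPoint.lineMap {s : Simplex ℝ E n} {x y : E} (hx : s.IsInteriorPoint x)
    (hy : s.IsInteriorPoint y) {t : ℝ} (ht₀ : 0 ≤ t) (ht₁ : t ≤ 1) :
    s.IsInteriorPoint (AffineMap.lineMap x y t) := by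
  obtain ⟨w, hw1, hw0, rfl⟩ := hx
  obtain ⟨r, hr1, hr0, rfl⟩ := hy
  refine ⟨AffineMap.lineMap w r t, ?_, fun i => ?_, (univ.lineMap_affineCombination ..).symm⟩
  · simp [AffineMap.lineMap_apply_module, sum_add_distrib, ← mul_sum, hw1, hr1]
  · simp only [AffineMap.lineMap_apply_module, Pi.add_apply, Pi.smul_apply, smul_eq_mul]
    rcases ht₀.eq_or_lt with rfl | ht₀
    · simpa using hw0 i
    · nlinarith [hw0 i, hr0 i]

theorem isInteriorPoint_lineMap_cons {τ : Simplex ℝ E n} {σ : Simplex ℝ E (n + 1)} {u z : E}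
    (hσ : σ.points = Fin.cons u τ.points) (hz : τ.IsInteriorPoint z) {t : ℝ} (ht₀ : 0 < t)
    (ht₁ : t < 1) : σ.IsInteriorPoint (AffineMap.lineMap z u t) := by
  obtain ⟨w, hw1, hw0, rfl⟩ := hz
  have hW1 : ∑ i, (Fin.cons t ((1 - t) • w) : Fin (n + 2) → ℝ) i = 1 := by
    simp [Fin.sum_cons, ← mul_sum, hw1]
  refine ⟨Fin.cons t ((1 - t) • w), hW1,
    Fin.cases ht₀ fun i => by simpa using mul_pos (sub_pos.2 ht₁) (hw0 i), ?_⟩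
  rw [affineCombination_eq_linear_combination _ _ _ hW1,
    affineCombination_eq_linear_combination _ _ _ hw1, hσ, Fin.sum_univ_succ,
    AffineMap.lineMap_apply_module]
  simp [smul_sum, mul_smul, add_comm]

theorem dist_sq_eq_dist_orthogonalProjectionSpan_sq_add (τ : Simplex ℝ E n) (u : E) {x : E}
    (hx : x ∈ affineSpan ℝ (Set.range τ.points)) :
    dist u x ^ 2 = dist (τ.orthogonalProjectionSpan u : E) x ^ 2 +
      dist u (τ.orthogonalProjectionSpan u) ^ 2 := by
  simp only [sq, dist_comm u x, dist_comm _ x]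
  exact τ.dist_sq_eq_dist_orthogonalProjection_sq_add_dist_orthogonalProjection_sq u hx

theorem circumcenter_eq_of_points_eq_cons (τ : Simplex ℝ E n) {u : E}
    (hu : u ∉ affineSpan ℝ (Set.range τ.points)) {σ : Simplex ℝ E (n + 1)}
    (hσ : σ.points = Fin.cons u τ.points) :
    σ.circumcenter = τ.circumcenter +
      ((dist u τ.circumcenter ^ 2 - τ.circumradius ^ 2) /
        (2 * dist u (τ.orthogonalProjectionSpan u) ^ 2)) •
        (u - τ.orthogonalProjectionSpan u) := by
  set S := affineSpan ℝ (Set.range τ.points)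
  set P : E := (τ.orthogonalProjectionSpan u : E)
  set c := τ.circumcenter
  set s := (dist u c ^ 2 - τ.circumradius ^ 2) / (2 * dist u P ^ 2)
  have hP : P ∈ S := (τ.orthogonalProjectionSpan u).2
  have hc : c ∈ S := τ.circumcenter_mem_affineSpan
  have huP : dist u P ≠ 0 := dist_ne_zero.2 fun h => hu (h ▸ hP)
  have hpyth := τ.dist_sq_eq_dist_orthogonalProjectionSpan_sq_add u hc
  have hnormal {a b : E} (ha : a ∈ S) (hb : b ∈ S) (r₁ r₂ : ℝ) :
      dist (a + r₁ • (u - P)) (b + r₂ • (u - P)) ^ 2 =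
        dist a b ^ 2 + (r₁ - r₂) ^ 2 * dist u P ^ 2 := by
    have := EuclideanGeometry.dist_sq_smul_orthogonal_vadd_smul_orthogonal_vadd ha hb r₁ r₂
      (EuclideanGeometry.vsub_orthogonalProjection_mem_direction_orthogonal S u)
    rw [Real.norm_eq_abs, abs_mul_abs_self, ← dist_eq_norm_vsub E] at this
    simp only [vadd_eq_add, vsub_eq_sub, add_comm _ a, add_comm _ b] at this
    simp only [sq]
    exact this
  have hdist_u : dist u (c + s • (u - P)) ^ 2 = τ.circumradius ^ 2 + s ^ 2 * dist u P ^ 2 := by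
    have hs : s * (2 * dist u P ^ 2) = dist u c ^ 2 - τ.circumradius ^ 2 :=
      div_mul_cancel₀ _ (by positivity)
    have := hnormal hP hc 1 s
    rw [one_smul, add_sub_cancel] at this
    rw [this]
    linear_combination -hpyth - hs
  have hdist_v (i : Fin (n + 1)) :
      dist (τ.points i) (c + s • (u - P)) ^ 2 = τ.circumradius ^ 2 + s ^ 2 * dist u P ^ 2 := by
    have hR : dist (τ.points i) c = τ.circumradius := τ.dist_circumcenter_eq_circumradius i
    simpa [hR] using hnormal (mem_affineSpan ℝ (Set.mem_range_self i)) hc 0 s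
  have hspan : S ≤ affineSpan ℝ (Set.range σ.points) :=
    affineSpan_mono ℝ <| hσ ▸ Set.range_subset_iff.2 fun i => ⟨i.succ, Fin.cons_succ ..⟩
  have hu' : u ∈ affineSpan ℝ (Set.range σ.points) :=
    mem_affineSpan ℝ ⟨0, by rw [hσ, Fin.cons_zero]⟩
  refine (σ.eq_circumcenter_of_dist_eq (r := dist u (c + s • (u - P))) ?_ fun i => ?_).symm
  · simpa only [vadd_eq_add, vsub_eq_sub, add_comm] using AffineSubspace.vadd_mem_of_mem_direction
      (Submodule.smul_mem _ _ (AffineSubspace.vsub_mem_direction hu' (hspan hP))) (hspan hc)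
  · rw [hσ]
    refine Fin.cases rfl (fun i => ?_) i
    rw [Fin.cons_succ, ← pow_left_inj₀ dist_nonneg dist_nonneg two_ne_zero, hdist_v, hdist_u]

end Affine.Simplex

/-- **Prism Condition**: let `τ` be an `(n−1)`-well-centered `(n−1)`-simplex and `u` a
point outside the affine span of `τ`, and let `σ = u ∗ τ` be the cone.  If `u` lies
strictly outside the equatorial ball of `τ` and the reflection of the orthogonal
projection of `u` through the circumcenter of `τ` lies in the relative interior of `τ`,
then `σ` is `n`-well-centered. -/
theorem cone_isWellCentered_of_dist_gt_of_reflection_interior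
    {n : ℕ} (τ : Affine.Simplex ℝ E n) (hτ : τ.IsWellCentered) (u : E)
    (hu : u ∉ affineSpan ℝ (Set.range τ.points))
    (σ : Affine.Simplex ℝ E (n + 1)) (hσ : σ.points = Fin.cons u τ.points)
    (hball : τ.circumradius < dist u τ.circumcenter)
    (hrefl : τ.IsInteriorPoint
      ((2 : ℝ) • τ.circumcenter - (τ.orthogonalProjectionSpan u : E))) :
    σ.IsWellCentered := by
  set c := τ.circumcenter
  set P : E := (τ.orthogonalProjectionSpan u : E)
  set s := (dist u c ^ 2 - τ.circumradius ^ 2) / (2 * dist u P ^ 2)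
  have hpyth := τ.dist_sq_eq_dist_orthogonalProjectionSpan_sq_add u τ.circumcenter_mem_affineSpan
  have huP : 0 < dist u P := dist_pos.2 fun h => hu (h ▸ (τ.orthogonalProjectionSpan u).2)
  have hPc : dist P c ≤ τ.circumradius := by
    have := hrefl.dist_circumcenter_le
    rwa [dist_eq_norm, two_smul, add_sub_right_comm, add_sub_cancel_right, ← dist_eq_norm,
      dist_comm] at this
  have hs₀ : 0 < s := div_pos (by nlinarith [τ.circumradius_nonneg]) (by positivity)
  have hs₁ : s ≤ 1 / 2 := by
    rw [div_le_iff₀ (by positivity)]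
    nlinarith [τ.circumradius_nonneg, dist_nonneg (x := P) (y := c)]
  have hq : σ.circumcenter =
      AffineMap.lineMap (AffineMap.lineMap c ((2 : ℝ) • c - P) (s / (1 - s))) u s := by
    rw [τ.circumcenter_eq_of_points_eq_cons hu hσ, AffineMap.lineMap_apply_module,
      AffineMap.lineMap_apply_module]
    have : 1 - s ≠ 0 := by linarith
    match_scalars <;> field_simp <;> ring
  have hz : τ.IsInteriorPoint (AffineMap.lineMap c ((2 : ℝ) • c - P) (s / (1 - s))) :=
    hτ.lineMap hrefl (div_nonneg hs₀.le (by linarith))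
      ((div_le_one (by linarith)).2 (by linarith))
  rw [Affine.Simplex.IsWellCentered, hq]
  exact Affine.Simplex.isInteriorPoint_lineMap_cons hσ hz hs₀ (by linarith)
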